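/- arXiv:1201.5967 — 9 statements merged into one kernel-verified Lean document; each statement's English description precedes it below -/
import Mathlib

section
/- Let q be an odd prime power and X, Y ∈ SL(2,q) with X ≠ Y. Then det(Y - X) = 0 if and only if (1-k)·X + k·Y ∈ SL(2,q) for all k ∈ GF(q) (i.e., det((1-k)X + kY) = 1 for all k). -/
/-- det(Y - X) = 0 iff (1-k)X + kY ∈ SL(2,q) for all k. -/
theorem stmt1 (F : Type*) [Field F] [Fintype F] (hodd : Odd (Fintype.card F))
    (X Y : Matrix (Fin 2) (Fin 2) F) (hX : X.det = 1) (hY : Y.det = 1) (hne : X ≠ Y) :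
    (Y - X).det = 0 ↔ ∀ k : F, ((1 - k) • X + k • Y).det = 1 := by
  have h2 : (2 : F) ≠ 0 := by
    intro h
    have hc : ringChar F = 2 := CharP.ringChar_of_prime_eq_zero Nat.prime_two h
    have he := FiniteField.even_card_of_char_two (F := F) hc
    obtain ⟨m, hm⟩ := hodd
    omega
  rw [Matrix.det_fin_two] at hX hY
  constructor
  · intro h k
    rw [Matrix.det_fin_two] at h ⊢
    simp only [Matrix.add_apply, Matrix.smul_apply, Matrix.sub_apply, smul_eq_mul] at h ⊢
    linear_combination (k ^ 2 - k) * h + (1 - k) * hX + k * hY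
  · intro h
    have h2' := h 2
    rw [Matrix.det_fin_two] at h2' ⊢
    simp only [Matrix.add_apply, Matrix.smul_apply, Matrix.sub_apply, smul_eq_mul] at h2' ⊢
    have key : (2 : F) * ((Y 0 0 - X 0 0) * (Y 1 1 - X 1 1) - (Y 0 1 - X 0 1) * (Y 1 0 - X 1 0)) = 0 := by
      linear_combination h2' + hX - 2 * hY
    rcases mul_eq_zero.mp key with hk | hk
    · exact absurd hk h2
    · exact hk
end

section
/- Let q be an odd prime power and X, Y ∈ SL(2,q) with X ≠ Y. If det((1-k)X + kY) = 1 for at least one k ∈ GF(q) with k ≠ 0 and k ≠ 1, then det((1-k)X + kY) = 1 for all k ∈ GF(q). -/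
/-- if det((1-k)X + kY) = 1 for one k ∉ {0,1}, then for all k. -/
theorem stmt2 (F : Type*) [Field F] [Fintype F] (hodd : Odd (Fintype.card F))
    (X Y : Matrix (Fin 2) (Fin 2) F) (hX : X.det = 1) (hY : Y.det = 1) (hne : X ≠ Y)
    (h : ∃ k : F, k ≠ 0 ∧ k ≠ 1 ∧ ((1 - k) • X + k • Y).det = 1) :
    ∀ k : F, ((1 - k) • X + k • Y).det = 1 := by
  obtain ⟨k, hk0, hk1, hk⟩ := h
  intro m
  simp only [Matrix.det_fin_two, Matrix.add_apply, Matrix.smul_apply, smul_eq_mul] at hX hY hk ⊢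
  set a := X 0 0; set b := X 0 1; set c := X 1 0; set d := X 1 1
  set e := Y 0 0; set f := Y 0 1; set g := Y 1 0; set i := Y 1 1
  have hB : ((a * i + d * e - b * g - c * f) - 2) * (k * (1 - k)) = 0 := by
    linear_combination hk - (1 - k)^2 * hX - k^2 * hY
  have hk1' : 1 - k ≠ 0 := sub_ne_zero.mpr (Ne.symm hk1)
  have hB2 : (a * i + d * e - b * g - c * f) - 2 = 0 := by
    rcases mul_eq_zero.mp hB with h1 | h2
    · exact h1
    · exact absurd h2 (mul_ne_zero hk0 hk1')
  linear_combination (1 - m)^2 * hX + m^2 * hY + (m * (1 - m)) * hB2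
end

section
/- Let q = p^h with p an odd prime, and let G be a subgroup of SL(2,q) of order q² - 1. Then for any two distinct X, Y ∈ G, det(X - Y) ≠ 0. -/
/-!
If `det (X - Y) = 0` for distinct `X, Y ∈ G`, then `Z = X Y⁻¹ ≠ 1` has `det (Z - 1) = 0`; together
with `det Z = 1` this forces `tr Z = 2`, so by Cayley–Hamilton `(Z - 1)² = 0`. Hence `Z` is a
nontrivial unipotent element and has order `p = char F`, which must divide `|G| = q² - 1`.
But `p ∣ q`, so `p ∤ q² - 1`.
-/

namespace Matrix

variable {R : Type*} [CommRing R]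

theorem sq_fin_two_eq_trace_smul_sub_det_smul (M : Matrix (Fin 2) (Fin 2) R) :
    M ^ 2 = M.trace • M - M.det • 1 := by
  ext i j
  fin_cases i <;> fin_cases j <;>
    simp [sq, mul_apply, trace_fin_two, det_fin_two] <;> ring

theorem det_sub_one_fin_two (M : Matrix (Fin 2) (Fin 2) R) :
    (M - 1).det = M.det - M.trace + 1 := by
  simp only [det_fin_two, trace_fin_two, sub_apply, one_apply_eq, one_apply_ne zero_ne_one,
    one_apply_ne one_ne_zero, sub_zero]
  ring

theorem sq_sub_one_eq_zero_of_det_eq_one {M : Matrix (Fin 2) (Fin 2) R} (hM : M.det = 1)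
    (h : (M - 1).det = 0) : (M - 1) ^ 2 = 0 := by
  have htrace : (M - 1).trace = 0 := by
    rw [det_sub_one_fin_two, hM] at h
    simp only [trace_sub, trace_one, Fintype.card_fin, Nat.cast_ofNat]
    linear_combination -h
  rw [sq_fin_two_eq_trace_smul_sub_det_smul, htrace, h, zero_smul, zero_smul, sub_zero]

end Matrix

theorem pow_char_eq_one_of_sq_sub_one_eq_zero {A : Type*} [Ring A] (p : ℕ) [Fact p.Prime]
    [CharP A p] {a : A} (h : (a - 1) ^ 2 = 0) : a ^ p = 1 := by
  have hpow : (a - 1) ^ p = 0 := pow_eq_zero_of_le (Fact.out : p.Prime).two_le h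
  calc a ^ p = (1 + (a - 1)) ^ p := by rw [add_sub_cancel]
    _ = 1 := by rw [add_pow_char_of_commute _ (Commute.one_left _), hpow, one_pow, add_zero]

namespace Matrix.SpecialLinearGroup

variable {R : Type*} [CommRing R] (p : ℕ) [Fact p.Prime] [CharP R p]

theorem pow_char_eq_one_of_det_sub_one_eq_zero {Z : SpecialLinearGroup (Fin 2) R}
    (h : ((Z : Matrix (Fin 2) (Fin 2) R) - 1).det = 0) : Z ^ p = 1 := by
  apply Subtype.ext
  rw [coe_pow, coe_one]
  exact pow_char_eq_one_of_sq_sub_one_eq_zero p (sq_sub_one_eq_zero_of_det_eq_one Z.2 h)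

theorem det_sub_ne_zero_of_not_dvd_card {G : Subgroup (SpecialLinearGroup (Fin 2) R)}
    (hG : ¬ p ∣ Nat.card G) {X Y : SpecialLinearGroup (Fin 2) R} (hX : X ∈ G) (hY : Y ∈ G)
    (hXY : X ≠ Y) : ((X : Matrix (Fin 2) (Fin 2) R) - Y).det ≠ 0 := by
  intro hdet
  set Z : G := ⟨X * Y⁻¹, mul_mem hX (inv_mem hY)⟩
  have hZ : Z ≠ 1 := fun h ↦ hXY (mul_inv_eq_one.mp (congrArg Subtype.val h))
  have hdetZ : ((X * Y⁻¹ : SpecialLinearGroup (Fin 2) R) - 1 : Matrix (Fin 2) (Fin 2) R).det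
      = 0 := by
    have hfactor : (X : Matrix (Fin 2) (Fin 2) R) - Y
        = ((X * Y⁻¹ : SpecialLinearGroup (Fin 2) R) - 1) * (Y : Matrix (Fin 2) (Fin 2) R) := by
      rw [sub_mul, one_mul, ← coe_mul, inv_mul_cancel_right]
    rwa [hfactor, det_mul, Y.2, mul_one] at hdet
  have hZp : Z ^ p = 1 := Subtype.ext (pow_char_eq_one_of_det_sub_one_eq_zero p hdetZ)
  exact hG (orderOf_eq_prime hZp hZ ▸ orderOf_dvd_natCard Z)

end Matrix.SpecialLinearGroup

theorem FiniteField.ringChar_not_dvd_card_pow_sub_one (F : Type*) [Field F] [Fintype F]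
    {n : ℕ} (hn : n ≠ 0) : ¬ ringChar F ∣ Fintype.card F ^ n - 1 := by
  intro hdvd
  have hcard : ringChar F ∣ Fintype.card F :=
    (CharP.cast_eq_zero_iff F (ringChar F) _).mp (FiniteField.cast_card_eq_zero F)
  have hpow : ringChar F ∣ Fintype.card F ^ n - 1 + 1 := by
    rw [Nat.sub_add_cancel (Nat.one_le_pow _ _ Fintype.card_pos)]
    exact dvd_pow hcard hn
  exact CharP.ringChar_ne_one ((Nat.dvd_one).mp ((Nat.dvd_add_right hdvd).mp hpow))

theorem stmt6_general
    (F : Type*) [Field F] [Fintype F]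
    (G : Subgroup (Matrix.SpecialLinearGroup (Fin 2) F))
    (hG : Nat.card G = Fintype.card F ^ 2 - 1) :
    ∀ X ∈ G, ∀ Y ∈ G, X ≠ Y →
      ((X : Matrix (Fin 2) (Fin 2) F) - (Y : Matrix (Fin 2) (Fin 2) F)).det ≠ 0 := by
  have : Fact (ringChar F).Prime := ⟨CharP.char_is_prime F (ringChar F)⟩
  intro X hX Y hY hXY
  refine Matrix.SpecialLinearGroup.det_sub_ne_zero_of_not_dvd_card (ringChar F) ?_ hX hY hXY
  rw [hG]
  exact FiniteField.ringChar_not_dvd_card_pow_sub_one F two_ne_zero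

/-- a subgroup of SL(2,q) of order q²-1 is an affine ovoid:
the difference of any two distinct elements is nonsingular. -/
theorem stmt6 (p h : ℕ) (hp : p.Prime) (hodd : Odd p) (hh : 1 ≤ h)
    (F : Type*) [Field F] [Fintype F] (hcard : Fintype.card F = p ^ h)
    (G : Subgroup (Matrix.SpecialLinearGroup (Fin 2) F))
    (hG : Nat.card G = Fintype.card F ^ 2 - 1) :
    ∀ X ∈ G, ∀ Y ∈ G, X ≠ Y →
      ((X : Matrix (Fin 2) (Fin 2) F) - (Y : Matrix (Fin 2) (Fin 2) F)).det ≠ 0 :=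
  stmt6_general F G hG
end

section
/- Let p be an odd prime and M ∈ SL(2,p^h). If M ≠ -I and Tr(M) = -2, then M has multiplicative order 2p. -/
lemma one_sub_pow_of_sq_zero {R : Type*} [CommRing R] (N : Matrix (Fin 2) (Fin 2) R)
    (hN : N * N = 0) (k : ℕ) : (1 - N) ^ k = 1 - (k : R) • N := by
  induction k with
  | zero => simp
  | succ n ih =>
    rw [pow_succ, ih, sub_mul, one_mul, mul_sub, mul_one, smul_mul_assoc, hN]
    push_cast
    rw [add_smul, one_smul, smul_zero]
    abel

/-- If M ∈ SL(2,p^h), M ≠ -I and Tr M = -2, then M has order 2p. -/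
theorem stmt7 (p h : ℕ) (hp : p.Prime) (hodd : Odd p) (hh : 1 ≤ h)
    (F : Type*) [Field F] [Fintype F] (hcard : Fintype.card F = p ^ h)
    (M : Matrix (Fin 2) (Fin 2) F) (hM : M.det = 1)
    (hne : M ≠ -1) (htr : M.trace = -2) :
    orderOf M = 2 * p := by
  haveI : Fact p.Prime := ⟨hp⟩
  have hpF : (p : F) = 0 := by
    have h0 : ((Fintype.card F : F)) = 0 := FiniteField.cast_card_eq_zero F
    rw [hcard] at h0
    push_cast at h0
    exact pow_eq_zero_iff (by omega) |>.mp h0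
  have hchar : CharP F p := by
    have hd : ringChar F ∣ p := ringChar.dvd hpF
    rcases (Nat.Prime.eq_one_or_self_of_dvd hp _ hd) with h1 | h1
    · exact absurd h1 (CharP.ringChar_ne_one)
    · rw [← h1]; exact ringChar.charP F
  have hpne2 : p ≠ 2 := by rintro rfl; simp [Nat.odd_iff] at hodd
  have hp2 : (2 : F) ≠ 0 := by
    intro h2
    have hdv := (CharP.cast_eq_zero_iff F p 2).mp (by exact_mod_cast h2)
    rcases (Nat.prime_two.eq_one_or_self_of_dvd p hdv) with h1 | h1 <;> [exact hp.one_lt.ne' h1; exact hpne2 h1]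
  -- the nilpotent part
  set N : Matrix (Fin 2) (Fin 2) F := M + 1 with hNdef
  have hNne : N ≠ 0 := fun h0 => hne (by rw [← add_eq_zero_iff_eq_neg]; exact h0)
  have htr' : M 0 0 + M 1 1 = -2 := by
    have := htr
    simpa [Matrix.trace_fin_two] using this
  have hdet' : M 0 0 * M 1 1 - M 0 1 * M 1 0 = 1 := by
    have := hM
    simpa [Matrix.det_fin_two] using this
  have hN2 : N * N = 0 := by
    ext i j
    fin_cases i <;> fin_cases j <;>
      simp [hNdef, Matrix.mul_apply, Fin.sum_univ_two, Matrix.one_apply] <;>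
      first
        | linear_combination M 0 0 * htr' - hdet'
        | linear_combination M 1 1 * htr' - hdet'
        | linear_combination M 0 1 * htr'
        | linear_combination M 1 0 * htr'
  have hMeq : M = -(1 - N) := by rw [hNdef]; abel
  have hpow : ∀ k : ℕ, M ^ k = (-1 : Matrix (Fin 2) (Fin 2) F) ^ k * (1 - (k : F) • N) := by
    intro k
    rw [hMeq, neg_pow, one_sub_pow_of_sq_zero N hN2]
  -- M^(2p) = 1
  have h2p : M ^ (2 * p) = 1 := by
    rw [hpow, pow_mul, neg_one_sq, one_pow, one_mul]
    push_cast [hpF]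
    simp
  have hdvd : orderOf M ∣ 2 * p := orderOf_dvd_of_pow_eq_one h2p
  set n := orderOf M with hn
  have hn1 : (-1 : Matrix (Fin 2) (Fin 2) F) ^ n * (1 - (n : F) • N) = 1 := by
    rw [← hpow]; exact pow_orderOf_eq_one M
  have hneven : 2 ∣ n := by
    rcases Nat.even_or_odd n with he | ho
    · exact he.two_dvd
    · exfalso
      rw [ho.neg_one_pow] at hn1
      have key : (n : F) • N = (2 : F) • (1 : Matrix (Fin 2) (Fin 2) F) := by
        rw [neg_one_mul, neg_sub] at hn1
        rw [two_smul]
        exact sub_eq_iff_eq_add.mp hn1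
      have hz : ((n : F) • N) * ((n : F) • N) = 0 := by
        rw [smul_mul_assoc, mul_smul_comm, hN2, smul_zero, smul_zero]
      rw [key, smul_mul_assoc, mul_smul_comm, one_mul, smul_smul] at hz
      have : (2 : F) * 2 = 0 := by
        have := congrFun (congrFun hz 0) 0
        simpa [Matrix.one_apply] using this
      rcases mul_eq_zero.mp this with h' | h' <;> exact hp2 h'
  have hpn : p ∣ n := by
    have hev : Even n := even_iff_two_dvd.mpr hneven
    rw [hev.neg_one_pow, one_mul] at hn1
    have : (n : F) • N = 0 := sub_eq_self.mp hn1
    rcases smul_eq_zero.mp this with h' | h'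
    · exact (CharP.cast_eq_zero_iff F p n).mp h'
    · exact absurd h' hNne
  have hcop : Nat.Coprime 2 p := Nat.coprime_two_left.mpr hodd
  exact Nat.dvd_antisymm hdvd (hcop.mul_dvd_of_dvd_of_dvd hneven hpn)
end

section
/- Let q = p^h with p an odd prime, and let G be a subgroup of SL(2,q) of order q² - 1. Then for every A ∈ G, also -A ∈ G; hence G is a disjoint union of (q²-1)/2 antipodal pairs {A, -A}. -/
/-!
Since `q` is odd, `q² - 1` is even, so `G` contains an element of order 2. In `SL(2, F)` with
`2 ≠ 0` the only involution is `-1`, because an involution equals its own inverse, which forces it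
to be a scalar matrix `±1`. Hence `-1 ∈ G` and `G` is closed under `A ↦ -A`; and `A ≠ -A` since
otherwise `2 • A = 0`, contradicting `det A = 1`.
-/

instance : Fact (Even (Fintype.card (Fin 2))) := ⟨by decide⟩

theorem FiniteField.two_ne_zero_of_odd_card {F : Type*} [Field F] [Fintype F]
    (h : Odd (Fintype.card F)) :
    (2 : F) ≠ 0 :=
  Ring.two_ne_zero fun hchar => by
    have := FiniteField.even_card_iff_char_two.mp hchar
    rw [← Nat.even_iff] at this
    exact Nat.not_even_iff_odd.mpr h this

namespace Matrix.SpecialLinearGroup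

variable {R : Type*} [CommRing R] [NoZeroDivisors R]

theorem ne_neg_self {n : Type*} [Fintype n] [DecidableEq n] [Nonempty n]
    [Fact (Even (Fintype.card n))] (h2 : (2 : R) ≠ 0) (A : SpecialLinearGroup n R) : A ≠ -A := by
  have : Nontrivial R := nontrivial_of_ne _ _ h2
  intro hA
  have hzero : (A : Matrix n n R) = 0 := by
    have h := congrArg ((↑) : SpecialLinearGroup n R → Matrix n n R) hA
    rw [coe_neg, eq_neg_iff_add_eq_zero, ← two_smul R] at h
    exact (smul_eq_zero.mp h).resolve_left h2
  simpa [hzero] using A.det_coe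

theorem eq_one_or_eq_neg_one_of_mul_self_eq_one (h2 : (2 : R) ≠ 0)
    {x : SpecialLinearGroup (Fin 2) R} (hx : x * x = 1) : x = 1 ∨ x = -1 := by
  have hinv (i j : Fin 2) : x⁻¹ i j = x i j := by rw [← eq_inv_of_mul_eq_one_left hx]
  simp only [SL2_inv_expl] at hinv
  have hd : x 1 1 = x 0 0 := by simpa using hinv 0 0
  have hb' : -x 0 1 = x 0 1 := by simpa using hinv 0 1
  have hc' : -x 1 0 = x 1 0 := by simpa using hinv 1 0
  have hb : x 0 1 = 0 :=
    (mul_eq_zero.mp (by linear_combination -hb' : (2 : R) * x 0 1 = 0)).resolve_left h2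
  have hc : x 1 0 = 0 :=
    (mul_eq_zero.mp (by linear_combination -hc' : (2 : R) * x 1 0 = 0)).resolve_left h2
  have ha : x 0 0 * x 0 0 = 1 := by
    have := x.det_coe
    rw [det_fin_two, hd, hb] at this
    simpa using this
  rcases mul_self_eq_one_iff.mp ha with ha | ha
  · left; ext i j; fin_cases i <;> fin_cases j <;> simp [hb, hc, hd, ha]
  · right; ext i j; fin_cases i <;> fin_cases j <;> simp [hb, hc, hd, ha]

theorem neg_one_mem_of_even_card (h2 : (2 : R) ≠ 0) {G : Subgroup (SpecialLinearGroup (Fin 2) R)}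
    [Finite G] (heven : Even (Nat.card G)) : -1 ∈ G := by
  obtain ⟨g, hg⟩ := exists_prime_orderOf_dvd_card' 2 heven.two_dvd
  rw [orderOf_eq_prime_iff, sq] at hg
  have hg1 : (g : SpecialLinearGroup (Fin 2) R) ≠ 1 := by exact_mod_cast hg.2
  rcases eq_one_or_eq_neg_one_of_mul_self_eq_one h2 (x := g) (by exact_mod_cast hg.1) with h | h
  · exact absurd h hg1
  · exact h ▸ g.2

end Matrix.SpecialLinearGroup

theorem stmt8_general (p h : ℕ) (hodd : Odd p)
    (F : Type*) [Field F] [Fintype F] (hcard : Fintype.card F = p ^ h)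
    (G : Subgroup (Matrix.SpecialLinearGroup (Fin 2) F))
    (hG : Nat.card G = Fintype.card F ^ 2 - 1) :
    (∀ A ∈ G, -A ∈ G) ∧ (∀ A ∈ G, A ≠ -A) := by
  have hq : Odd (Fintype.card F) := hcard ▸ hodd.pow
  have h2 : (2 : F) ≠ 0 := FiniteField.two_ne_zero_of_odd_card hq
  have hneg : -1 ∈ G :=
    Matrix.SpecialLinearGroup.neg_one_mem_of_even_card h2 (hG ▸ Nat.Odd.sub_odd hq.pow odd_one)
  exact ⟨fun A hA => neg_one_mul A ▸ G.mul_mem hneg hA,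
    fun A _ => Matrix.SpecialLinearGroup.ne_neg_self h2 A⟩

/-- a subgroup G of SL(2,q) of order q²-1 is closed under negation,
hence is a disjoint union of (q²-1)/2 antipodal pairs {A, -A}. -/
theorem stmt8 (p h : ℕ) (hp : p.Prime) (hodd : Odd p) (hh : 1 ≤ h)
    (F : Type*) [Field F] [Fintype F] (hcard : Fintype.card F = p ^ h)
    (G : Subgroup (Matrix.SpecialLinearGroup (Fin 2) F))
    (hG : Nat.card G = Fintype.card F ^ 2 - 1) :
    (∀ A ∈ G, -A ∈ G) ∧ (∀ A ∈ G, A ≠ -A) :=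
  stmt8_general p h hodd F hcard G hG
end

section
/- Let q be an odd prime power and t ∈ GF(q). The number of matrices X ∈ SL(2,q) with Tr(X) = t equals q·(q + δ(t)), where δ(t) = -1 if t² - 4 is a non-square in GF(q), δ(t) = 0 if t² - 4 = 0, and δ(t) = 1 if t² - 4 is a nonzero square in GF(q). -/
open Classical

/-!
With the trace fixed to `t`, a matrix `!![a, b; c, t - a]` has determinant one iff
`b * c = a * (t - a) - 1`. The hyperbola `b * c = m` has `q - 1` points for `m ≠ 0` and `2q - 1`
points for `m = 0`, so summing over `a` gives `q (q - 1)` plus `q` for every root of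
`a * (t - a) = 1`. Completing the square, these roots are the square roots of the discriminant
`t ^ 2 - 4`, and there are `χ (t ^ 2 - 4) + 1` of them, where `χ` is the quadratic character.
-/

section Hyperbola

variable {G₀ : Type*} [GroupWithZero G₀] [Fintype G₀]

lemma card_mul_eq_of_ne_zero {b : G₀} (hb : b ≠ 0) (m : G₀) :
    Fintype.card {c : G₀ // b * c = m} = 1 :=
  Fintype.card_eq_one_iff.mpr
    ⟨⟨b⁻¹ * m, mul_inv_cancel_left₀ hb m⟩,
      fun c => Subtype.ext ((eq_inv_mul_iff_mul_eq₀ hb).mpr c.2)⟩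

lemma card_zero_mul_eq (m : G₀) :
    Fintype.card {c : G₀ // 0 * c = m} = if m = 0 then Fintype.card G₀ else 0 := by
  split_ifs with hm
  · subst hm
    simp
  · simp [Ne.symm hm]

lemma card_hyperbola (m : G₀) :
    (Fintype.card {p : G₀ × G₀ // p.1 * p.2 = m} : ℤ) =
      Fintype.card G₀ - 1 + if m = 0 then (Fintype.card G₀ : ℤ) else 0 := by
  rw [Fintype.card_congr (Equiv.subtypeProdEquivSigmaSubtype fun b c : G₀ => b * c = m),
    Fintype.card_sigma, Nat.cast_sum, Fintype.sum_eq_add_sum_compl 0, card_zero_mul_eq,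
    Finset.sum_congr rfl fun b hb => by
      rw [card_mul_eq_of_ne_zero (Finset.mem_compl.mp hb ∘ Finset.mem_singleton.mpr)]]
  simp [Finset.card_compl, Nat.cast_sub Fintype.card_pos, Nat.cast_ite]
  ring

end Hyperbola

lemma card_mul_sub_eq_quadraticChar {F : Type*} [Field F] [Fintype F] (hF : ringChar F ≠ 2)
    (t c : F) :
    (Fintype.card {a : F // a * (t - a) = c} : ℤ) = quadraticChar F (t ^ 2 - 4 * c) + 1 := by
  have h2 : (2 : F) ≠ 0 := Ring.two_ne_zero hF
  let e : {a : F // a * (t - a) = c} ≃ {x : F // x ^ 2 = t ^ 2 - 4 * c} :=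
    { toFun a := ⟨2 * a - t, by linear_combination (-4 : F) * a.2⟩
      invFun x := ⟨(x + t) / 2, by field_simp; linear_combination -x.2⟩
      left_inv a := Subtype.ext (by field_simp; ring)
      right_inv x := Subtype.ext (by field_simp; ring) }
  rw [Fintype.card_congr e, ← quadraticChar_card_sqrts hF, Set.toFinset_card]
  rfl

def Matrix.detOneTraceEquiv {R : Type*} [CommRing R] (t : R) :
    {X : Matrix (Fin 2) (Fin 2) R // X.det = 1 ∧ X.trace = t} ≃
      {p : R × R × R // p.2.1 * p.2.2 = p.1 * (t - p.1) - 1} where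
  toFun X := ⟨(X.1 0 0, X.1 0 1, X.1 1 0), by
    obtain ⟨X, hdet, htr⟩ := X
    rw [Matrix.det_fin_two] at hdet
    rw [Matrix.trace_fin_two] at htr
    linear_combination X 0 0 * htr - hdet⟩
  invFun p := ⟨!![p.1.1, p.1.2.1; p.1.2.2, t - p.1.1], by
    rw [Matrix.det_fin_two_of, Matrix.trace_fin_two_of]
    exact ⟨by linear_combination -p.2, by ring⟩⟩
  left_inv X := by
    obtain ⟨X, -, htr⟩ := X
    rw [Matrix.trace_fin_two] at htr
    ext i j
    fin_cases i <;> fin_cases j <;> simp [← htr]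
  right_inv p := rfl

/-- the number of X ∈ SL(2,q) with Tr X = t equals q(q + δ(t)). -/
theorem stmt11 (F : Type*) [Field F] [Fintype F] (hodd : Odd (Fintype.card F)) (t : F) :
    (Nat.card {X : Matrix (Fin 2) (Fin 2) F // X.det = 1 ∧ X.trace = t} : ℤ) =
      (Fintype.card F : ℤ) * ((Fintype.card F : ℤ) +
        (if t ^ 2 - 4 = 0 then 0 else if IsSquare (t ^ 2 - 4) then 1 else -1)) := by
  have hF : ringChar F ≠ 2 := fun h =>
    Nat.not_odd_iff.mpr (FiniteField.even_card_of_char_two h) hodd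
  have hroots := card_mul_sub_eq_quadraticChar hF t 1
  rw [mul_one, quadraticChar_apply, quadraticCharFun, Fintype.card_subtype] at hroots
  rw [Nat.card_congr ((Matrix.detOneTraceEquiv t).trans
      (Equiv.subtypeProdEquivSigmaSubtype fun a (p : F × F) => p.1 * p.2 = a * (t - a) - 1)),
    Nat.card_eq_fintype_card, Fintype.card_sigma, Nat.cast_sum]
  simp only [card_hyperbola, sub_eq_zero (b := (1 : F)), Finset.sum_add_distrib, Finset.sum_const,
    Finset.sum_ite, Finset.card_univ, nsmul_eq_mul, hroots]
  ring
end

section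
/- Let q be odd, M, N ∈ GL(2,q) with det M = det N, and σ a field automorphism of GF(q). Then X ↦ M·(X⁻¹)^σ·N⁻¹ sends SL(2,q) to SL(2,q) and preserves collinearity: for distinct X, Y ∈ SL(2,q), det(X - Y) = 0 iff det(M(X⁻¹)^σN⁻¹ - M(Y⁻¹)^σN⁻¹) = 0. -/
/-- X ↦ M (X⁻¹)^σ N⁻¹, with det M = det N ≠ 0 and σ a field
automorphism, preserves SL(2,q) and collinearity. -/
theorem stmt14 (F : Type*) [Field F] [Fintype F] (hodd : Odd (Fintype.card F))
    (M N : Matrix (Fin 2) (Fin 2) F) (hM : M.det ≠ 0) (hN : N.det ≠ 0)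
    (hdet : M.det = N.det) (σ : F ≃+* F) :
    (∀ X : Matrix (Fin 2) (Fin 2) F, X.det = 1 → (M * (X⁻¹).map σ * N⁻¹).det = 1) ∧
    (∀ X Y : Matrix (Fin 2) (Fin 2) F, X.det = 1 → Y.det = 1 → X ≠ Y →
      ((X - Y).det = 0 ↔
        (M * (X⁻¹).map σ * N⁻¹ - M * (Y⁻¹).map σ * N⁻¹).det = 0)) := by
  have hNinv : (N⁻¹ : Matrix (Fin 2) (Fin 2) F).det = (N.det)⁻¹ := by
    rw [Matrix.det_nonsing_inv, Ring.inverse_eq_inv]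
  have hmap : ∀ A : Matrix (Fin 2) (Fin 2) F, (A.map σ).det = σ A.det := by
    intro A
    exact (RingHom.map_det (σ : F →+* F) A).symm
  constructor
  · intro X hX
    have hXinv : (X⁻¹ : Matrix (Fin 2) (Fin 2) F).det = 1 := by
      rw [Matrix.det_nonsing_inv, hX, Ring.inverse_one]
    rw [Matrix.det_mul, Matrix.det_mul, hmap, hXinv, map_one, mul_one, hNinv, hdet,
      mul_inv_cancel₀ hN]
  · intro X Y hX hY _
    have hXu : IsUnit X.det := by rw [hX]; exact isUnit_one
    have hYu : IsUnit Y.det := by rw [hY]; exact isUnit_one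
    have hfact : M * (X⁻¹).map σ * N⁻¹ - M * (Y⁻¹).map σ * N⁻¹
        = M * ((X⁻¹ - Y⁻¹).map σ) * N⁻¹ := by
      rw [Matrix.map_sub _ (map_sub σ)]
      noncomm_ring
    have hdiff : X⁻¹ - Y⁻¹ = X⁻¹ * (Y - X) * Y⁻¹ := by
      rw [Matrix.mul_sub, Matrix.sub_mul, Matrix.mul_assoc,
        Matrix.mul_nonsing_inv _ hYu, Matrix.nonsing_inv_mul _ hXu,
        Matrix.mul_one, Matrix.one_mul]
    have hXinv : (X⁻¹ : Matrix (Fin 2) (Fin 2) F).det = 1 := by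
      rw [Matrix.det_nonsing_inv, hX, Ring.inverse_one]
    have hYinv : (Y⁻¹ : Matrix (Fin 2) (Fin 2) F).det = 1 := by
      rw [Matrix.det_nonsing_inv, hY, Ring.inverse_one]
    have hYX : (Y - X).det = (X - Y).det := by
      rw [← neg_sub X Y, Matrix.det_neg]
      simp
    rw [hfact, Matrix.det_mul, Matrix.det_mul, hmap, hdiff, Matrix.det_mul,
      Matrix.det_mul, hXinv, hYinv, hYX, one_mul, mul_one, hNinv, hdet]
    rw [mul_eq_zero, mul_eq_zero]
    simp [hN, inv_eq_zero, EmbeddingLike.map_eq_zero_iff]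
end

section
/- Let D ⊆ GF(5)⁴ consist of the 8 vectors (±1,0,0,0), (0,±1,0,0), (0,0,±1,0), (0,0,0,±1) and the 16 vectors (±3,±3,±3,±3) (where 3 = 1/2 in GF(5)). Then |D| = 24, every vector in D has self inner product 1, and the standard inner product of any two distinct vectors of D is never equal to 1. -/
/-!
Since `v ⬝ᵥ v = w ⬝ᵥ w = 1`, polarization gives `(v - w) ⬝ᵥ (v - w) = 2 - 2 (v ⬝ᵥ w)`, so
`v ⬝ᵥ w = 1` forces `v - w` to be isotropic. For two vectors `(±3, ±3, ±3, ±3)` the difference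
has entries `0, ±1` (as `6 = 1`), so its square is the number `d ≤ 4` of differing coordinates,
which vanishes mod 5 only if `v = w`. For `±eᵢ` against `±eⱼ` the product is `0` or `a b = -1`,
and for `±eᵢ` against a vector `w` with entries `±3` the product `±wᵢ` squares to `9 = -1`,
so it cannot be `1`.
-/

open Finset Matrix

variable {ι : Type*}

theorem sub_dotProduct_sub_eq_zero [Fintype ι] {R : Type*} [CommRing R] {v w : ι → R}
    (hv : v ⬝ᵥ v = 1) (hw : w ⬝ᵥ w = 1) (hvw : v ⬝ᵥ w = 1) : (v - w) ⬝ᵥ (v - w) = 0 := by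
  rw [sub_dotProduct, dotProduct_sub, dotProduct_sub, dotProduct_comm w v, hv, hw, hvw]
  ring

def IsUnitRoot [DecidableEq ι] (v : ι → ZMod 5) : Prop :=
  ∃ i, v = Pi.single i 1 ∨ v = Pi.single i (-1)

def IsHalfRoot (v : ι → ZMod 5) : Prop :=
  ∀ i, v i = 3 ∨ v i = -3

instance [Fintype ι] [DecidableEq ι] : DecidablePred (IsUnitRoot (ι := ι)) :=
  fun _ => inferInstanceAs (Decidable (∃ _, _))

instance [Fintype ι] : DecidablePred (IsHalfRoot (ι := ι)) :=
  fun _ => inferInstanceAs (Decidable (∀ _, _))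

namespace IsUnitRoot

variable [DecidableEq ι] {v w : ι → ZMod 5}

theorem exists_eq_single (hv : IsUnitRoot v) : ∃ i a, a * a = 1 ∧ v = Pi.single i a := by
  obtain ⟨i, rfl | rfl⟩ := hv
  exacts [⟨i, 1, by decide, rfl⟩, ⟨i, -1, by decide, rfl⟩]

variable [Fintype ι]

theorem dotProduct_self (hv : IsUnitRoot v) : v ⬝ᵥ v = 1 := by
  obtain ⟨i, a, ha, rfl⟩ := hv.exists_eq_single
  simpa [single_dotProduct] using ha

theorem dotProduct_ne_one (hv : IsUnitRoot v) (hw : IsUnitRoot w) (hne : v ≠ w) :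
    v ⬝ᵥ w ≠ 1 := by
  obtain ⟨i, a, ha, rfl⟩ := hv.exists_eq_single
  obtain ⟨k, b, hb, rfl⟩ := hw.exists_eq_single
  rw [single_dotProduct]
  by_cases hik : i = k
  · subst hik
    rw [Pi.single_eq_same]
    intro hab
    refine hne (congrArg _ ?_)
    calc a = a * (b * b) := by rw [hb, mul_one]
      _ = a * b * b := (mul_assoc a b b).symm
      _ = b := by rw [hab, one_mul]
  · rw [Pi.single_eq_of_ne hik, mul_zero]
    decide

end IsUnitRoot

namespace IsHalfRoot

variable {v w : ι → ZMod 5}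

theorem mul_self (hv : IsHalfRoot v) (j : ι) : v j * v j = -1 := by
  rcases hv j with h | h <;> rw [h] <;> decide

theorem sub_mul_sub (hv : IsHalfRoot v) (hw : IsHalfRoot w) (j : ι) :
    (v j - w j) * (v j - w j) = if v j ≠ w j then 1 else 0 := by
  rcases hv j with hv | hv <;> rcases hw j with hw | hw <;> rw [hv, hw] <;> decide

variable [Fintype ι]

theorem dotProduct_self (hv : IsHalfRoot v) : v ⬝ᵥ v = -Fintype.card ι := by
  simp [dotProduct, hv.mul_self]

theorem dotProduct_self_eq_one (hι : Fintype.card ι = 4) (hv : IsHalfRoot v) :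
    v ⬝ᵥ v = 1 := by
  rw [hv.dotProduct_self, hι]
  decide

theorem sub_dotProduct_sub (hv : IsHalfRoot v) (hw : IsHalfRoot w) :
    (v - w) ⬝ᵥ (v - w) = #{j | v j ≠ w j} := by
  simp only [dotProduct, Pi.sub_apply, hv.sub_mul_sub hw, Finset.sum_boole]

theorem eq_of_sub_dotProduct_sub_eq_zero (hι : Fintype.card ι < 5) (hv : IsHalfRoot v)
    (hw : IsHalfRoot w) (h : (v - w) ⬝ᵥ (v - w) = 0) : v = w := by
  rw [hv.sub_dotProduct_sub hw, ZMod.natCast_eq_zero_iff] at h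
  have hcard : #{j | v j ≠ w j} = 0 :=
    Nat.eq_zero_of_dvd_of_lt h ((card_filter_le _ _).trans_lt hι)
  funext j
  by_contra hj
  exact filter_eq_empty_iff.mp (card_eq_zero.mp hcard) (mem_univ j) hj

end IsHalfRoot

theorem IsUnitRoot.dotProduct_ne_one_of_isHalfRoot [Fintype ι] [DecidableEq ι]
    {v w : ι → ZMod 5} (hv : IsUnitRoot v) (hw : IsHalfRoot w) : v ⬝ᵥ w ≠ 1 := by
  obtain ⟨i, a, ha, rfl⟩ := hv.exists_eq_single
  rw [single_dotProduct]
  intro h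
  have : (1 : ZMod 5) = -1 := by
    calc (1 : ZMod 5) = a * w i * (a * w i) := by rw [h, one_mul]
      _ = a * a * (w i * w i) := by ring
      _ = -1 := by rw [ha, hw.mul_self, one_mul]
  exact absurd this (by decide)

theorem card_isUnitRoot_or_isHalfRoot :
    Nat.card {v : Fin 4 → ZMod 5 | IsUnitRoot v ∨ IsHalfRoot v} = 24 := by
  rw [Nat.card_eq_fintype_card, Fintype.card_ofFinset]
  decide

/-- the 8 vectors ±eᵢ together with the 16 vectors (±3,±3,±3,±3) in
GF(5)⁴ form a set D of 24 vectors, each of self inner product 1, such that the inner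
product of two distinct vectors of D is never 1. -/
theorem stmt18 :
    let D : Set (Fin 4 → ZMod 5) :=
      {v | (∃ i : Fin 4, v = Pi.single i 1 ∨ v = Pi.single i (-1)) ∨
        (∀ i : Fin 4, v i = 3 ∨ v i = -3)}
    Nat.card D = 24 ∧
    (∀ v ∈ D, ∑ j, v j * v j = 1) ∧
    (∀ v ∈ D, ∀ w ∈ D, v ≠ w → ∑ j, v j * w j ≠ 1) := by
  refine ⟨card_isUnitRoot_or_isHalfRoot, ?_, ?_⟩
  · rintro v (hv | hv)
    exacts [IsUnitRoot.dotProduct_self hv,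
      IsHalfRoot.dotProduct_self_eq_one (Fintype.card_fin 4) hv]
  · intro v hv w hw hne
    change v ⬝ᵥ w ≠ 1
    rcases hv with hv | hv <;> rcases hw with hw | hw
    · exact IsUnitRoot.dotProduct_ne_one hv hw hne
    · exact IsUnitRoot.dotProduct_ne_one_of_isHalfRoot hv hw
    · rw [dotProduct_comm]
      exact IsUnitRoot.dotProduct_ne_one_of_isHalfRoot hw hv
    · exact fun h => hne <| IsHalfRoot.eq_of_sub_dotProduct_sub_eq_zero (by decide) hv hw <|
        sub_dotProduct_sub_eq_zero (IsHalfRoot.dotProduct_self_eq_one (Fintype.card_fin 4) hv)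
          (IsHalfRoot.dotProduct_self_eq_one (Fintype.card_fin 4) hw) h
end

section
/- Let q be an odd prime power and O ⊆ SL(2,q) a set of size q²-1 with det(X-Y) ≠ 0 for all distinct X, Y ∈ O. If I ∉ O, then O contains exactly q+1 elements X with Tr X = 2 (necessarily all different from I). -/
/-!
For `v ≠ 0`, two matrices `X`, `Y` in the same left coset of the stabiliser `U` of `v` in
`SL(2, q)` satisfy `(X - Y) v = 0`, hence `det (X - Y) = 0`; so `O` meets each coset at most
once. The cosets of `U` correspond to the orbit of `v`, so there are at most `q² - 1 = |O|` of
them, and `O` must meet `U` itself: some element of `O` fixes `v`, and it is unique. An element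
of `SL(2, q)` has trace `2` exactly when it fixes a nonzero vector, and an element other than `I`
fixes at most one point of the projective line. Hence the trace-`2` elements of `O` correspond
to the `q + 1` points of the projective line.
-/

open Matrix MatrixGroups
open scoped LinearAlgebra.Projectivization

theorem Subgroup.exists_mem_of_injOn_mk {G : Type*} [Group G] (H : Subgroup G) [Finite (G ⧸ H)]
    {S : Set G} (hinj : S.InjOn (QuotientGroup.mk : G → G ⧸ H))
    (hcard : Nat.card (G ⧸ H) ≤ Nat.card S) : ∃ s ∈ S, s ∈ H := by
  obtain ⟨⟨s, hs⟩, hs1⟩ := (hinj.injective.bijective_of_nat_card_le hcard).surjective (1 : G)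
  exact ⟨s, hs, by simpa using QuotientGroup.eq.mp hs1⟩

theorem MulAction.card_quotient_stabilizer_le {G V : Type*} [Group G] [AddGroup V] [Finite V]
    [DistribMulAction G V] {v : V} (hv : v ≠ 0) :
    Nat.card (G ⧸ stabilizer G v) ≤ Nat.card V - 1 := by
  rw [← Nat.card_congr (orbitEquivQuotientStabilizer G v), Nat.card_coe_set_eq,
    ← Set.ncard_singleton (0 : V), ← Set.ncard_compl]
  refine Set.ncard_le_ncard ?_
  rintro _ ⟨g, rfl⟩
  simpa [smul_eq_zero_iff_eq] using hv

namespace Matrix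

variable {n K : Type*} [Fintype n] [DecidableEq n]

theorem det_sub_eq_zero_of_mulVec_eq [CommRing K] [IsDomain K] {X Y : Matrix n n K} {v : n → K}
    (hv : v ≠ 0) (h : X *ᵥ v = Y *ᵥ v) : (X - Y).det = 0 :=
  exists_mulVec_eq_zero_iff.mp ⟨v, hv, by rw [sub_mulVec, h, sub_self]⟩

theorem eq_of_mulVec_eq_of_linearIndependent [Field K] {X Y : Matrix n n K} {b : n → n → K}
    (hb : LinearIndependent K b) (h : ∀ i, X *ᵥ b i = Y *ᵥ b i) : X = Y := by
  let B := basisOfLinearIndependentOfCardEqFinrank' b hb (by simp)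
  exact toLin'.injective (B.ext fun i => by simpa [B] using h i)

theorem det_sub_one_fin_two_s19 [CommRing K] (X : Matrix (Fin 2) (Fin 2) K) :
    (X - 1).det = X.det - X.trace + 1 := by
  simp [det_fin_two, trace_fin_two]
  ring

theorem trace_eq_two_iff_exists_mulVec_eq_self [Field K] {X : Matrix (Fin 2) (Fin 2) K}
    (hX : X.det = 1) : X.trace = 2 ↔ ∃ v ≠ 0, X *ᵥ v = v := by
  have key : (X - 1).det = 0 ↔ X.trace = 2 := by
    rw [det_sub_one_fin_two_s19, hX]
    constructor <;> intro h <;> linear_combination -h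
  simp only [← key, ← exists_mulVec_eq_zero_iff, sub_mulVec, one_mulVec, sub_eq_zero]

end Matrix

theorem Projectivization.eq_of_mulVec_rep_eq_self {K : Type*} [Field K]
    {X : Matrix (Fin 2) (Fin 2) K} (hX : X ≠ 1) {L L' : ℙ K (Fin 2 → K)}
    (hL : X *ᵥ L.rep = L.rep) (hL' : X *ᵥ L'.rep = L'.rep) : L = L' := by
  by_contra hne
  have hind := independent_iff.mp ((independent_pair_iff_ne L L').mpr hne)
  exact hX (eq_of_mulVec_eq_of_linearIndependent hind fun i => by fin_cases i <;> simp [hL, hL'])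

section AffineOvoid

variable {F : Type*} [Field F] {O : Set (Matrix (Fin 2) (Fin 2) F)}

theorem eq_of_mulVec_eq_of_mem (hdiff : ∀ X ∈ O, ∀ Y ∈ O, X ≠ Y → (X - Y).det ≠ 0)
    {X Y : Matrix (Fin 2) (Fin 2) F} (hX : X ∈ O) (hY : Y ∈ O) {v : Fin 2 → F} (hv : v ≠ 0)
    (h : X *ᵥ v = Y *ᵥ v) : X = Y :=
  by_contra fun hne => hdiff X hX Y hY hne (det_sub_eq_zero_of_mulVec_eq hv h)

theorem exists_mem_mulVec_eq_self [Fintype F] (hO : ∀ X ∈ O, X.det = 1)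
    (hcard : Nat.card O = Fintype.card F ^ 2 - 1)
    (hdiff : ∀ X ∈ O, ∀ Y ∈ O, X ≠ Y → (X - Y).det ≠ 0) {v : Fin 2 → F} (hv : v ≠ 0) :
    ∃ X ∈ O, X *ᵥ v = v := by
  let S : Set SL(2, F) := (↑) ⁻¹' O
  have hS : Nat.card S = Nat.card O := by
    rw [Nat.card_coe_set_eq, Nat.card_coe_set_eq]
    exact Set.ncard_preimage_of_injective_subset_range Subtype.val_injective
      fun X hX => ⟨⟨X, hO X hX⟩, rfl⟩
  have hquot : Nat.card (SL(2, F) ⧸ MulAction.stabilizer SL(2, F) v) ≤ Nat.card S := by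
    simpa [hS, hcard, Nat.card_eq_fintype_card] using
      MulAction.card_quotient_stabilizer_le (G := SL(2, F)) hv
  have hinj : S.InjOn (QuotientGroup.mk : SL(2, F) → _ ⧸ MulAction.stabilizer SL(2, F) v) :=
    fun x hx y hy hxy => Subtype.ext <| eq_of_mulVec_eq_of_mem hdiff hx hy hv
      (congrArg (MulAction.ofQuotientStabilizer SL(2, F) v) hxy)
  obtain ⟨g, hgO, hg⟩ := (MulAction.stabilizer SL(2, F) v).exists_mem_of_injOn_mk hinj hquot
  exact ⟨g, hgO, hg⟩

end AffineOvoid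

theorem stmt19_general (F : Type*) [Field F] [Fintype F]
    (O : Set (Matrix (Fin 2) (Fin 2) F)) (hO : ∀ X ∈ O, X.det = 1)
    (hcard : Nat.card O = Fintype.card F ^ 2 - 1)
    (hdiff : ∀ X ∈ O, ∀ Y ∈ O, X ≠ Y → (X - Y).det ≠ 0)
    (hI : (1 : Matrix (Fin 2) (Fin 2) F) ∉ O) :
    Nat.card {X : Matrix (Fin 2) (Fin 2) F // X ∈ O ∧ X.trace = 2} =
      Fintype.card F + 1 := by
  choose f hfO hf using fun L : ℙ F (Fin 2 → F) =>
    exists_mem_mulVec_eq_self hO hcard hdiff L.rep_nonzero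
  let φ (L : ℙ F (Fin 2 → F)) : {X // X ∈ O ∧ X.trace = 2} :=
    ⟨f L, hfO L, (trace_eq_two_iff_exists_mulVec_eq_self (hO _ (hfO L))).mpr
      ⟨_, L.rep_nonzero, hf L⟩⟩
  have hφ : Function.Bijective φ := by
    refine ⟨fun L L' h => ?_, fun ⟨X, hXO, hX2⟩ => ?_⟩
    · have h' : f L = f L' := congrArg Subtype.val h
      exact Projectivization.eq_of_mulVec_rep_eq_self (fun h1 => hI (h1 ▸ hfO L)) (hf L)
        (h' ▸ hf L')
    · obtain ⟨v, hv, hXv⟩ := (trace_eq_two_iff_exists_mulVec_eq_self (hO X hXO)).mp hX2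
      obtain ⟨a, ha⟩ := Projectivization.exists_smul_eq_mk_rep F v hv
      refine ⟨Projectivization.mk F v hv, Subtype.ext (eq_of_mulVec_eq_of_mem hdiff (hfO _) hXO
        (Projectivization.mk F v hv).rep_nonzero ?_)⟩
      rw [hf, ← ha, Units.smul_def, mulVec_smul, hXv]
  rw [← Nat.card_congr (Equiv.ofBijective φ hφ),
    Projectivization.card_of_finrank_two F (Fin 2 → F) (by simp), Nat.card_eq_fintype_card]

/-- if O is an affine ovoid of SL(2,q) with I ∉ O, then O contains
exactly q+1 elements of trace 2. -/
theorem stmt19 (F : Type*) [Field F] [Fintype F] (hodd : Odd (Fintype.card F))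
    (O : Set (Matrix (Fin 2) (Fin 2) F)) (hO : ∀ X ∈ O, X.det = 1)
    (hcard : Nat.card O = Fintype.card F ^ 2 - 1)
    (hdiff : ∀ X ∈ O, ∀ Y ∈ O, X ≠ Y → (X - Y).det ≠ 0)
    (hI : (1 : Matrix (Fin 2) (Fin 2) F) ∉ O) :
    Nat.card {X : Matrix (Fin 2) (Fin 2) F // X ∈ O ∧ X.trace = 2} =
      Fintype.card F + 1 :=
  stmt19_general F O hO hcard hdiff hI
end
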